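/- Let x̄₀ ∈ (0,1) satisfy φ(x̄₀) = x̄₀, and let γ : ℝ → ℝ be differentiable at x̄₀ with γ(x̄₀) = x̄₀ and satisfying γ(y)/f(γ(y)) = g(y) for all y in some neighbourhood of x̄₀. Then γ′(x̄₀) = f(x̄₀)g′(x̄₀)/(1 − g(x̄₀)f′(x̄₀)); moreover γ′(x̄₀) < −1 holds if and only if condition (cond0): f(x̄₀)g′(x̄₀) − f′(x̄₀)g(x̄₀) < −1. -/

import Mathlib

/-- The Hill-type function `f(x) = 1/(a + x^k)` of the reduced Hes1–Notch model. -/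
noncomputable def fHill (a : ℝ) (k : ℕ) : ℝ → ℝ := fun x => 1 / (a + x ^ k)

/-- The Hill-type function `g(x) = 1/(1 + b·x^h)` of the reduced Hes1–Notch model. -/
noncomputable def gHill (b : ℝ) (h : ℕ) : ℝ → ℝ := fun x => 1 / (1 + b * x ^ h)

/-!
Differentiating the stationary relation `γ(y) / f(γ(y)) = g(y)` at the fixed point gives
`γ′ · (f - x̄₀ f′) / f² = g′`, and since `x̄₀ / f(x̄₀) = g(x̄₀)` this is `γ′ (1 - g f′) = f g′`.
For the Hill function `f` we have `f′ ≤ 0` on `[0, ∞)`, so `1 - g f′ > 0`; multiplying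
`γ′ < -1` by this positive factor turns it into (cond0).
-/

open Filter Topology

theorem deriv_mul_one_sub_eq_of_div_comp_eventuallyEq {f g γ : ℝ → ℝ} {x₀ : ℝ}
    (hf : DifferentiableAt ℝ f x₀) (hf₀ : f x₀ ≠ 0) (hγ : DifferentiableAt ℝ γ x₀)
    (hγx₀ : γ x₀ = x₀) (hfg : ∀ᶠ y in 𝓝 x₀, γ y / f (γ y) = g y) :
    deriv γ x₀ * (1 - g x₀ * deriv f x₀) = f x₀ * deriv g x₀ := by
  have hG : HasDerivAt (fun x => x / f x) ((1 * f x₀ - x₀ * deriv f x₀) / f x₀ ^ 2) (γ x₀) := by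
    rw [hγx₀]
    exact (hasDerivAt_id x₀).div hf.hasDerivAt hf₀
  have hg : HasDerivAt g ((1 * f x₀ - x₀ * deriv f x₀) / f x₀ ^ 2 * deriv γ x₀) x₀ :=
    (hG.comp x₀ hγ.hasDerivAt).congr_of_eventuallyEq (hfg.mono fun _ hy => hy.symm)
  have hg₀ : g x₀ = x₀ / f x₀ := by simpa [hγx₀] using hfg.self_of_nhds.symm
  rw [hg.deriv, hg₀]
  field_simp

theorem lt_neg_one_iff_of_mul_one_sub_eq {s f₀ g₀ f₁ g₁ : ℝ} (hD : 0 < 1 - g₀ * f₁)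
    (hs : s * (1 - g₀ * f₁) = f₀ * g₁) : s < -1 ↔ f₀ * g₁ - f₁ * g₀ < -1 := by
  rw [← mul_lt_mul_iff_of_pos_right hD, hs]
  constructor <;> intro <;> linarith

section Hill

variable {a x : ℝ} {k : ℕ}

theorem fHill_pos (ha : 0 < a) (hx : 0 ≤ x) : 0 < fHill a k x := by
  unfold fHill
  positivity

theorem hasDerivAt_fHill (hx : a + x ^ k ≠ 0) :
    HasDerivAt (fHill a k) (-(k * x ^ (k - 1)) / (a + x ^ k) ^ 2) x := by
  have hf : fHill a k = fun y => (a + y ^ k)⁻¹ := funext fun _ => one_div _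
  rw [hf]
  exact ((hasDerivAt_pow k x).const_add a).inv hx

theorem deriv_fHill_nonpos (ha : 0 < a) (hx : 0 ≤ x) : deriv (fHill a k) x ≤ 0 := by
  rw [(hasDerivAt_fHill (by positivity)).deriv, neg_div]
  exact neg_nonpos.2 (by positivity)

end Hill

theorem gamma_deriv_at_fixed_point_general
    (a b : ℝ) (ha : 0 < a) (k h : ℕ)
    (x0 : ℝ) (hx0 : x0 ∈ Set.Ioo (0 : ℝ) 1)
    (γ : ℝ → ℝ) (hγdiff : DifferentiableAt ℝ γ x0) (hγfix : γ x0 = x0)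
    (hγ : ∀ᶠ y in nhds x0, γ y / fHill a k (γ y) = gHill b h y) :
    deriv γ x0 =
        fHill a k x0 * deriv (gHill b h) x0 / (1 - gHill b h x0 * deriv (fHill a k) x0) ∧
      (deriv γ x0 < -1 ↔
        fHill a k x0 * deriv (gHill b h) x0 - deriv (fHill a k) x0 * gHill b h x0 < -1) := by
  have hx0 : 0 ≤ x0 := hx0.1.le
  have hf0 : 0 < fHill a k x0 := fHill_pos ha hx0
  have hg0 : 0 ≤ gHill b h x0 := by
    rw [← hγ.self_of_nhds, hγfix]
    exact div_nonneg hx0 hf0.le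
  have hD : 0 < 1 - gHill b h x0 * deriv (fHill a k) x0 := by
    linarith [mul_nonpos_of_nonneg_of_nonpos hg0 (deriv_fHill_nonpos (k := k) ha hx0)]
  have hslope := deriv_mul_one_sub_eq_of_div_comp_eventuallyEq
    (hasDerivAt_fHill (by positivity)).differentiableAt hf0.ne' hγdiff hγfix hγ
  exact ⟨eq_div_of_mul_eq hD.ne' hslope, lt_neg_one_iff_of_mul_one_sub_eq hD hslope⟩

/-- If `γ` is the implicitly defined stationary-response map, i.e. `γ(y)/f(γ(y)) = g(y)`
near the homogeneous stationary state `x̄₀`, `γ(x̄₀) = x̄₀` and `γ` is differentiable at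
`x̄₀`, then `γ′(x̄₀) = f(x̄₀)g′(x̄₀)/(1 − g(x̄₀)f′(x̄₀))`, and `γ′(x̄₀) < −1` holds if and
only if condition (cond0): `f(x̄₀)g′(x̄₀) − f′(x̄₀)g(x̄₀) < −1`. -/
theorem gamma_deriv_at_fixed_point
    (a b : ℝ) (ha : 0 < a) (hb : 0 < b) (k h : ℕ) (hk : 1 ≤ k) (hh : 1 ≤ h)
    (x0 : ℝ) (hx0 : x0 ∈ Set.Ioo (0 : ℝ) 1)
    (hfix : fHill a k x0 * gHill b h x0 = x0)
    (γ : ℝ → ℝ) (hγdiff : DifferentiableAt ℝ γ x0) (hγfix : γ x0 = x0)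
    (hγ : ∀ᶠ y in nhds x0, γ y / fHill a k (γ y) = gHill b h y) :
    deriv γ x0 =
        fHill a k x0 * deriv (gHill b h) x0 / (1 - gHill b h x0 * deriv (fHill a k) x0) ∧
      (deriv γ x0 < -1 ↔
        fHill a k x0 * deriv (gHill b h) x0 - deriv (fHill a k) x0 * gHill b h x0 < -1) :=
  gamma_deriv_at_fixed_point_general a b ha k h x0 hx0 γ hγdiff hγfix hγ
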